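/- Let F(1), G(1) ∈ ℝ³ with F(1) ≠ 0 and F(1)·G(1) ≥ 0, and define G(s) = G(1) + (s-1)F(1) for s ≥ 1. Then for all s ≥ 1, |G(s)|² ≥ (min(|G(1)|², |F(1)|²)/2) · s². -/

import Mathlib

/-!
Expanding the square, `|G(s)|² ≥ |G(1)|² + (s-1)²|F(1)|² ≥ m (1 + (s-1)²)` with `m` the minimum,
because the cross term `2(s-1) F(1)·G(1)` is nonnegative; and `2(1 + (s-1)²) - s² = (s-2)² ≥ 0`.
-/

open RealInnerProductSpace

theorem norm_sq_add_sq_mul_norm_sq_le_norm_add_smul_sq {E : Type*} [NormedAddCommGroup E]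
    [InnerProductSpace ℝ E] {x v : E} {t : ℝ} (ht : 0 ≤ t) (hvx : 0 ≤ ⟪v, x⟫) :
    ‖x‖ ^ 2 + t ^ 2 * ‖v‖ ^ 2 ≤ ‖x + t • v‖ ^ 2 := by
  have hcross : 0 ≤ t * ⟪x, v⟫ := mul_nonneg ht (real_inner_comm x v ▸ hvx)
  rw [norm_add_sq_real, real_inner_smul_right, norm_smul, mul_pow, Real.norm_eq_abs, sq_abs]
  linarith

theorem sq_le_two_mul_one_add_sub_one_sq (s : ℝ) : s ^ 2 ≤ 2 * (1 + (s - 1) ^ 2) := by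
  nlinarith [sq_nonneg (s - 2)]

theorem stmt0_general (F1 G1 : EuclideanSpace ℝ (Fin 3))
    (hFG : (0:ℝ) ≤ inner ℝ F1 G1)
    (G : ℝ → EuclideanSpace ℝ (Fin 3))
    (hG : ∀ s : ℝ, 1 ≤ s → G s = G1 + (s - 1) • F1) :
    ∀ s : ℝ, 1 ≤ s → ‖G s‖ ^ 2 ≥ (min (‖G1‖ ^ 2) (‖F1‖ ^ 2) / 2) * s ^ 2 := by
  intro s hs
  set m := min (‖G1‖ ^ 2) (‖F1‖ ^ 2)
  have hm : 0 ≤ m := le_min (sq_nonneg _) (sq_nonneg _)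
  rw [hG s hs, ge_iff_le]
  calc m / 2 * s ^ 2 ≤ m * (1 + (s - 1) ^ 2) := by
        nlinarith [mul_le_mul_of_nonneg_left (sq_le_two_mul_one_add_sub_one_sq s) hm]
    _ ≤ ‖G1‖ ^ 2 + (s - 1) ^ 2 * ‖F1‖ ^ 2 := by
        nlinarith [min_le_left (‖G1‖ ^ 2) (‖F1‖ ^ 2), min_le_right (‖G1‖ ^ 2) (‖F1‖ ^ 2),
          sq_nonneg (s - 1)]
    _ ≤ ‖G1 + (s - 1) • F1‖ ^ 2 :=
        norm_sq_add_sq_mul_norm_sq_le_norm_add_smul_sq (sub_nonneg.mpr hs) hFG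

/-- If `F(1) ≠ 0`, `F(1)·G(1) ≥ 0`, and `G(s) = G(1) + (s-1)F(1)` for `s ≥ 1`,
then `|G(s)|² ≥ (min(|G(1)|², |F(1)|²)/2) · s²` for all `s ≥ 1`. -/
theorem stmt0 (F1 G1 : EuclideanSpace ℝ (Fin 3)) (hF : F1 ≠ 0)
    (hFG : (0:ℝ) ≤ inner ℝ F1 G1)
    (G : ℝ → EuclideanSpace ℝ (Fin 3))
    (hG : ∀ s : ℝ, 1 ≤ s → G s = G1 + (s - 1) • F1) :
    ∀ s : ℝ, 1 ≤ s → ‖G s‖ ^ 2 ≥ (min (‖G1‖ ^ 2) (‖F1‖ ^ 2) / 2) * s ^ 2 :=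
  stmt0_general F1 G1 hFG G hG
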